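/- Let C be a Boolean algebra of commuting weak*-continuous idempotents on a dual Banach space X, Y a weak*-closed C-invariant subspace, and V₁, ..., V_k C-decomposable subspaces. Then the weak* closure of Y + ⋂ⱼVⱼ equals ⋂ⱼ (weak* closure of Y + Vⱼ). Moreover, if Y is C-reflexive then the weak* closure of Y + ⋂ⱼ Vⱼ is C-reflexive. -/

import Mathlib

open NormedSpace Filter Pointwise

namespace RBP

variable (E : Type*) [NormedAddCommGroup E] [NormedSpace ℂ E]

/-- The dual Banach space. -/
abbrev X := StrongDual ℂ E

variable {E}

/-- A subset of the dual is weak*-closed if its image in `WeakDual` is closed. -/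
def WClosed (S : Set (X E)) : Prop :=
  IsClosed (StrongDual.toWeakDual '' S)

/-- The weak* closure of a subset of the dual. -/
def WClosure (S : Set (X E)) : Set (X E) :=
  StrongDual.toWeakDual ⁻¹' closure (StrongDual.toWeakDual '' S)

/-- An operator on the dual is weak*-continuous if the induced map on `WeakDual` is continuous. -/
def WContinuous (φ : X E →L[ℂ] X E) : Prop :=
  Continuous (fun x : WeakDual ℂ E =>
    StrongDual.toWeakDual (φ (StrongDual.toWeakDual.symm x)))

/-- The range (fixed point set) of an idempotent operator. -/
def Ran (φ : X E →L[ℂ] X E) : Set (X E) := {x | φ x = x}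

/-- A Boolean algebra of pairwise commuting weak*-continuous idempotents on the dual. -/
structure IsIdemBoolAlg (C : Set (X E →L[ℂ] X E)) : Prop where
  idem : ∀ φ ∈ C, φ.comp φ = φ
  comm : ∀ φ ∈ C, ∀ ψ ∈ C, φ.comp ψ = ψ.comp φ
  wcont : ∀ φ ∈ C, WContinuous φ
  zero_mem : (0 : X E →L[ℂ] X E) ∈ C
  id_mem : (ContinuousLinearMap.id ℂ (X E)) ∈ C
  compl_mem : ∀ φ ∈ C, (ContinuousLinearMap.id ℂ (X E) - φ) ∈ C
  mul_mem : ∀ φ ∈ C, ∀ ψ ∈ C, φ.comp ψ ∈ C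
  sup_mem : ∀ φ ∈ C, ∀ ψ ∈ C, (φ + ψ - φ.comp ψ) ∈ C

/-- The `C`-reflexive hull of a subset of the dual. -/
def RefC (C : Set (X E →L[ℂ] X E)) (Y : Set (X E)) : Set (X E) :=
  {x | ∀ φ ∈ C, (∀ y ∈ Y, φ y = 0) → φ x = 0}

/-- A subset is `C`-invariant if it is invariant under each member of `C`. -/
def CInvariant (C : Set (X E →L[ℂ] X E)) (Y : Set (X E)) : Prop :=
  ∀ φ ∈ C, ∀ y ∈ Y, φ y ∈ Y

/-- Approximately `C`-injective subspaces: intersections of uniformly bounded decreasing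
sequences of ranges of idempotents in `C`. -/
def ApproxInj (C : Set (X E →L[ℂ] X E)) (M : Set (X E)) : Prop :=
  ∃ (φ : ℕ → (X E →L[ℂ] X E)) (K : ℝ), 0 < K ∧ (∀ n, φ n ∈ C) ∧ (∀ n, ‖φ n‖ ≤ K) ∧
    (∀ n, Ran (φ (n + 1)) ⊆ Ran (φ n)) ∧ M = ⋂ n, Ran (φ n)

/-- The set of weak* cluster points of sequences chosen from a sequence of sets. -/
def WLimsup (M : ℕ → Set (X E)) : Set (X E) :=
  {x | ∃ s : ℕ → X E, (∀ n, s n ∈ M n) ∧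
    MapClusterPt (StrongDual.toWeakDual x) atTop
      (fun n => StrongDual.toWeakDual (s n))}

/-- `C`-decomposable subspaces. -/
def Decomp (C : Set (X E →L[ℂ] X E)) (V : Set (X E)) : Prop :=
  WClosed V ∧
  ∃ (φ : ℕ → (X E →L[ℂ] X E)) (W : ℕ → Set (X E)) (K : ℝ), 0 < K ∧
    (∀ n, φ n ∈ C) ∧ (∀ n, ∃ ψ ∈ C, W n = Ran ψ) ∧ (∀ n, ‖φ n‖ ≤ K) ∧
    (∀ n, V ⊆ Ran (φ n) + W n) ∧ (∀ n, W n ⊆ V) ∧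
    WLimsup (fun n => Ran (φ n)) ⊆ V


-- ### Infrastructure for the weak* topology

lemma tau_injective : Function.Injective (StrongDual.toWeakDual : X E → WeakDual ℂ E) :=
  StrongDual.toWeakDual.injective

lemma mem_wclosure {S : Set (X E)} {x : X E} :
    x ∈ WClosure S ↔ StrongDual.toWeakDual x ∈ closure (StrongDual.toWeakDual '' S) := Iff.rfl

lemma subset_wclosure (S : Set (X E)) : S ⊆ WClosure S := by
  intro x hx
  show StrongDual.toWeakDual x ∈ closure (StrongDual.toWeakDual '' S)
  exact subset_closure (Set.mem_image_of_mem _ hx)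

lemma wclosure_mono {S T : Set (X E)} (h : S ⊆ T) : WClosure S ⊆ WClosure T := by
  intro x hx
  show StrongDual.toWeakDual x ∈ closure (StrongDual.toWeakDual '' T)
  exact closure_mono (Set.image_mono h) hx

lemma wclosure_subset {S T : Set (X E)} (hST : S ⊆ T) (hT : WClosed T) : WClosure S ⊆ T := by
  intro x hx
  have h1 : StrongDual.toWeakDual x ∈ closure (StrongDual.toWeakDual '' T) :=
    closure_mono (Set.image_mono hST) hx
  rw [hT.closure_eq] at h1
  obtain ⟨y, hy, hyx⟩ := h1
  rwa [← tau_injective hyx]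

lemma image_wclosure (S : Set (X E)) :
    StrongDual.toWeakDual '' (WClosure S) = closure (StrongDual.toWeakDual '' S) :=
  Set.image_preimage_eq _ StrongDual.toWeakDual.surjective

lemma wclosed_wclosure (S : Set (X E)) : WClosed (WClosure S) := by
  rw [WClosed, image_wclosure]; exact isClosed_closure

lemma wclosed_of_wclosure_eq {S : Set (X E)} (h : WClosure S = S) : WClosed S := by
  rw [← h]; exact wclosed_wclosure S

/-- Applying a weak*-continuous map to an element of a weak* closure. -/
lemma wclosure_map {φ : X E →L[ℂ] X E} (hφ : WContinuous φ) {S : Set (X E)} {x : X E}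
    (hx : x ∈ WClosure S) : φ x ∈ WClosure (φ '' S) := by
  set Φ : WeakDual ℂ E → WeakDual ℂ E :=
    fun w => StrongDual.toWeakDual (φ (StrongDual.toWeakDual.symm w)) with hΦdef
  have hΦ : Continuous Φ := hφ
  have key : ∀ v : X E, Φ (StrongDual.toWeakDual v) = StrongDual.toWeakDual (φ v) := fun _ => rfl
  have h1 : Φ (StrongDual.toWeakDual x) ∈ closure (Φ '' (StrongDual.toWeakDual '' S)) :=
    (image_closure_subset_closure_image hΦ) (Set.mem_image_of_mem _ hx)
  have h2 : Φ '' (StrongDual.toWeakDual '' S) = StrongDual.toWeakDual '' (φ '' S) := by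
    rw [← Set.image_comp, ← Set.image_comp]
    exact Set.image_congr fun v _ => key v
  rw [mem_wclosure, ← key x, ← h2]
  exact h1

lemma wclosure_map_self {φ : X E →L[ℂ] X E} (hφ : WContinuous φ) {S : Set (X E)}
    (hinv : ∀ s ∈ S, φ s ∈ S) {x : X E} (hx : x ∈ WClosure S) : φ x ∈ WClosure S := by
  have h := wclosure_map hφ hx
  exact wclosure_mono (by rintro _ ⟨s, hs, rfl⟩; exact hinv s hs) h

lemma wclosed_ran {φ : X E →L[ℂ] X E} (hφ : WContinuous φ) : WClosed (Ran φ) := by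
  set Φ : WeakDual ℂ E → WeakDual ℂ E :=
    fun w => StrongDual.toWeakDual (φ (StrongDual.toWeakDual.symm w)) with hΦdef
  have hΦ : Continuous Φ := hφ
  have himg : StrongDual.toWeakDual '' (Ran φ) = {w : WeakDual ℂ E | Φ w = w} := by
    ext w
    constructor
    · rintro ⟨v, hv, rfl⟩
      show StrongDual.toWeakDual (φ v) = StrongDual.toWeakDual v
      rw [hv]
    · intro hw
      exact ⟨StrongDual.toWeakDual.symm w, hw, rfl⟩
  rw [WClosed, himg]
  exact isClosed_eq hΦ continuous_id

/-- Ultrafilter weak* limits of norm-bounded sequences exist (Banach-Alaoglu). -/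
lemma exists_ulim (a : ℕ → X E) (r : ℝ) (hr : ∀ m, ‖a m‖ ≤ r) :
    ∃ L : X E, Tendsto (fun m => (StrongDual.toWeakDual (a m) : WeakDual ℂ E))
      (Ultrafilter.of (atTop : Filter ℕ)) (nhds (StrongDual.toWeakDual L)) := by
  set U := Ultrafilter.of (atTop : Filter ℕ)
  set Kc : Set (WeakDual ℂ E) := WeakDual.toStrongDual ⁻¹' Metric.closedBall 0 r with hKc
  have hcomp : IsCompact Kc := WeakDual.isCompact_closedBall (𝕜 := ℂ) (0 : StrongDual ℂ E) r
  set f : Ultrafilter (WeakDual ℂ E) := U.map (fun m => StrongDual.toWeakDual (a m)) with hf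
  have hle : ↑f ≤ Filter.principal Kc := by
    rw [le_principal_iff]
    have hmem : ∀ m, StrongDual.toWeakDual (a m) ∈ Kc := by
      intro m
      simp only [hKc, Set.mem_preimage, Metric.mem_closedBall, dist_zero_right]
      exact hr m
    exact Filter.mem_map.2 (Filter.univ_mem' hmem)
  obtain ⟨w, _, hwle⟩ := hcomp.ultrafilter_le_nhds f hle
  exact ⟨WeakDual.toStrongDual w, by simpa [Filter.Tendsto, hf] using hwle⟩

lemma ulim_mem_of_wclosed {a : ℕ → X E} {L : X E} {S : Set (X E)} (hS : WClosed S)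
    (ha : ∀ m, a m ∈ S)
    (hT : Tendsto (fun m => (StrongDual.toWeakDual (a m) : WeakDual ℂ E))
      (Ultrafilter.of (atTop : Filter ℕ)) (nhds (StrongDual.toWeakDual L))) : L ∈ S := by
  have hmem : StrongDual.toWeakDual L ∈ StrongDual.toWeakDual '' S := by
    refine hS.mem_of_tendsto hT ?_
    exact Filter.Eventually.of_forall fun m => Set.mem_image_of_mem _ (ha m)
  obtain ⟨y, hy, hyx⟩ := hmem
  rwa [← tau_injective hyx]

/-- Limits pass to differences from a constant. -/
lemma tendsto_const_sub_ulim {a : ℕ → X E} {L z : X E}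
    (hT : Tendsto (fun m => (StrongDual.toWeakDual (a m) : WeakDual ℂ E))
      (Ultrafilter.of (atTop : Filter ℕ)) (nhds (StrongDual.toWeakDual L))) :
    Tendsto (fun m => (StrongDual.toWeakDual (z - a m) : WeakDual ℂ E))
      (Ultrafilter.of (atTop : Filter ℕ)) (nhds (StrongDual.toWeakDual (z - L))) := by
  have h1 : Tendsto (fun m => (StrongDual.toWeakDual z - StrongDual.toWeakDual (a m) : WeakDual ℂ E))
      (Ultrafilter.of (atTop : Filter ℕ)) (nhds (StrongDual.toWeakDual z - StrongDual.toWeakDual L)) :=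
    Filter.Tendsto.const_sub _ hT
  have e1 : ∀ m, (StrongDual.toWeakDual z - StrongDual.toWeakDual (a m) : WeakDual ℂ E)
      = StrongDual.toWeakDual (z - a m) := fun m => (map_sub StrongDual.toWeakDual z (a m)).symm
  have e2 : (StrongDual.toWeakDual z - StrongDual.toWeakDual L : WeakDual ℂ E)
      = StrongDual.toWeakDual (z - L) := (map_sub StrongDual.toWeakDual z L).symm
  rw [← e2]
  exact h1.congr e1

/-- An ultrafilter limit along `Ultrafilter.of atTop` is a cluster point along `atTop`. -/
lemma mapClusterPt_of_ulim {a : ℕ → X E} {L : X E}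
    (hT : Tendsto (fun m => (StrongDual.toWeakDual (a m) : WeakDual ℂ E))
      (Ultrafilter.of (atTop : Filter ℕ)) (nhds (StrongDual.toWeakDual L))) :
    MapClusterPt (StrongDual.toWeakDual L) atTop
      (fun m => (StrongDual.toWeakDual (a m) : WeakDual ℂ E)) := by
  have h2 : (Ultrafilter.of (atTop : Filter ℕ) : Filter ℕ).map
        (fun m => (StrongDual.toWeakDual (a m) : WeakDual ℂ E))
      ≤ Filter.map (fun m => (StrongDual.toWeakDual (a m) : WeakDual ℂ E)) atTop :=
    Filter.map_mono (Ultrafilter.of_le _)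
  exact Filter.neBot_of_le (le_inf hT h2)

lemma mem_wclosure_coe {q : Submodule ℂ (X E)} {x : X E} :
    x ∈ WClosure (q : Set (X E)) ↔
      StrongDual.toWeakDual x ∈
        (q.map (StrongDual.toWeakDual : X E ≃ₗ[ℂ] WeakDual ℂ E).toLinearMap).topologicalClosure := by
  have h1 : (StrongDual.toWeakDual : X E → WeakDual ℂ E) '' (q : Set (X E))
      = ((q.map (StrongDual.toWeakDual : X E ≃ₗ[ℂ] WeakDual ℂ E).toLinearMap :
          Submodule ℂ (WeakDual ℂ E)) : Set (WeakDual ℂ E)) := by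
    rw [Submodule.map_coe]; rfl
  show StrongDual.toWeakDual x ∈
      closure ((StrongDual.toWeakDual : X E → WeakDual ℂ E) '' (q : Set (X E))) ↔ _
  rw [h1, ← Submodule.topologicalClosure_coe]
  rfl

lemma wclosure_coe_add {q : Submodule ℂ (X E)} {a b : X E}
    (ha : a ∈ WClosure (q : Set (X E))) (hb : b ∈ WClosure (q : Set (X E))) :
    a + b ∈ WClosure (q : Set (X E)) := by
  rw [mem_wclosure_coe] at ha hb ⊢
  rw [map_add]
  exact Submodule.add_mem _ ha hb

lemma wclosure_coe_sub {q : Submodule ℂ (X E)} {a b : X E}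
    (ha : a ∈ WClosure (q : Set (X E))) (hb : b ∈ WClosure (q : Set (X E))) :
    a - b ∈ WClosure (q : Set (X E)) := by
  rw [mem_wclosure_coe] at ha hb ⊢
  rw [map_sub]
  exact Submodule.sub_mem _ ha hb

/-- `Y + Ran ψ` is weak*-closed, for a weak*-closed `C`-invariant submodule `Y`
and `ψ ∈ C`. -/
lemma wclosed_add_ran {C : Set (X E →L[ℂ] X E)} (hC : IsIdemBoolAlg C)
    {Y : Submodule ℂ (X E)} (hYc : WClosed (Y : Set (X E))) (hYi : CInvariant C (Y : Set (X E)))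
    {ψ : X E →L[ℂ] X E} (hψ : ψ ∈ C) :
    WClosed ((Y : Set (X E)) + Ran ψ) := by
  have hψw : WContinuous ψ := hC.wcont ψ hψ
  have hidem : ∀ v : X E, ψ (ψ v) = ψ v := by
    intro v
    have h := hC.idem ψ hψ
    calc ψ (ψ v) = (ψ.comp ψ) v := rfl
    _ = ψ v := by rw [h]
  have hcl : WClosure ((Y : Set (X E)) + Ran ψ) ⊆ (Y : Set (X E)) + Ran ψ := by
    intro z hz
    set φ' := ContinuousLinearMap.id ℂ (X E) - ψ with hφ'def
    have hφ'C : φ' ∈ C := hC.compl_mem ψ hψ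
    have h1 : φ' z ∈ WClosure (φ' '' ((Y : Set (X E)) + Ran ψ)) :=
      wclosure_map (hC.wcont _ hφ'C) hz
    have himg1 : φ' '' ((Y : Set (X E)) + Ran ψ) ⊆ (Y : Set (X E)) := by
      rintro _ ⟨v, hv, rfl⟩
      rw [Set.mem_add] at hv
      obtain ⟨y, hy, r, hr, rfl⟩ := hv
      have hr' : ψ r = r := hr
      have hval : φ' (y + r) = y - ψ y := by
        simp only [hφ'def, ContinuousLinearMap.sub_apply, ContinuousLinearMap.coe_id', id_eq,
          map_add, hr']
        abel
      rw [hval]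
      exact Y.sub_mem hy (hYi ψ hψ y hy)
    have h2 : φ' z ∈ (Y : Set (X E)) := wclosure_subset himg1 hYc h1
    have h3 : ψ z ∈ Ran ψ := by
      have h1' : ψ z ∈ WClosure (ψ '' ((Y : Set (X E)) + Ran ψ)) := wclosure_map hψw hz
      have himg2 : ψ '' ((Y : Set (X E)) + Ran ψ) ⊆ Ran ψ := by
        rintro _ ⟨v, _, rfl⟩
        exact hidem v
      exact wclosure_subset himg2 (wclosed_ran hψw) h1'
    have hzeq : z = φ' z + ψ z := by
      simp only [hφ'def, ContinuousLinearMap.sub_apply, ContinuousLinearMap.coe_id', id_eq]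
      abel
    rw [hzeq]
    exact Set.add_mem_add h2 h3
  exact wclosed_of_wclosure_eq (Set.Subset.antisymm hcl (subset_wclosure _))

set_option maxHeartbeats 1000000 in
theorem intersection_of_decomposables {C : Set (X E →L[ℂ] X E)} (hC : IsIdemBoolAlg C)
    (Y : Submodule ℂ (X E)) (hYc : WClosed (Y : Set (X E)))
    (hYi : CInvariant C (Y : Set (X E)))
    (k : ℕ) (hk : 0 < k) (V : Fin k → Set (X E))
    (hVsub : ∀ j, ∃ p : Submodule ℂ (X E), V j = (p : Set (X E)))
    (hV : ∀ j, Decomp C (V j)) :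
    WClosure ((Y : Set (X E)) + ⋂ j, V j) = ⋂ j, WClosure ((Y : Set (X E)) + V j) ∧
      (RefC C (Y : Set (X E)) = (Y : Set (X E)) →
        RefC C (WClosure ((Y : Set (X E)) + ⋂ j, V j)) =
          WClosure ((Y : Set (X E)) + ⋂ j, V j)) := by
  classical
  have hVc : ∀ j, WClosed (V j) := fun j => (hV j).1
  choose φs Ws Ks hKpos hφsC hWspec hKs hVsubRW hWsubV hWlim using fun j => (hV j).2
  choose ψs hψsC hWeq using hWspec
  choose p hp using hVsub
  -- pointwise algebra
  have hcommP : ∀ θ ∈ C, ∀ θ' ∈ C, ∀ v : X E, θ (θ' v) = θ' (θ v) := by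
    intro θ hθ θ' hθ' v
    have h := hC.comm θ hθ θ' hθ'
    calc θ (θ' v) = (θ.comp θ') v := rfl
    _ = (θ'.comp θ) v := by rw [h]
    _ = θ' (θ v) := rfl
  have hidemP : ∀ θ ∈ C, ∀ v : X E, θ (θ v) = θ v := by
    intro θ hθ v
    have h := hC.idem θ hθ
    calc θ (θ v) = (θ.comp θ) v := rfl
    _ = θ v := by rw [h]
  set χ : Fin k → ℕ → (X E →L[ℂ] X E) :=
    fun j m => φs j m + ψs j m - (φs j m).comp (ψs j m) with hχdef
  have hχC : ∀ j m, χ j m ∈ C := fun j m =>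
    hC.sup_mem (φs j m) (hφsC j m) (ψs j m) (hψsC j m)
  have hχapply : ∀ j m (v : X E), χ j m v = φs j m v + ψs j m (v - φs j m v) := by
    intro j m v
    simp only [hχdef, ContinuousLinearMap.sub_apply, ContinuousLinearMap.add_apply,
      ContinuousLinearMap.comp_apply, map_sub]
    rw [hcommP _ (hφsC j m) _ (hψsC j m) v]
    abel
  -- every element of V j is fixed by χ j m
  have hVRanχ : ∀ j m, V j ⊆ Ran (χ j m) := by
    intro j m v hv
    have hv' := hVsubRW j m hv
    rw [Set.mem_add] at hv'
    obtain ⟨a, ha, b, hb, rfl⟩ := hv'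
    have haR : φs j m a = a := ha
    have hbR : ψs j m b = b := by
      have := hb; rw [hWeq j m] at this; exact this
    have h1 : χ j m a = a := by
      rw [hχapply, haR, sub_self, map_zero, add_zero]
    have h2 : χ j m b = b := by
      rw [hχapply]
      have : ψs j m (b - φs j m b) = b - φs j m b := by
        rw [map_sub, hbR, hcommP _ (hψsC j m) _ (hφsC j m) b, hbR]
      rw [this]; abel
    show χ j m (a + b) = a + b
    rw [map_add, h1, h2]
  -- Y + Ran (χ j m) is weak*-closed and contains WClosure (Y + V j)
  have hYRanW : ∀ j m, WClosed ((Y : Set (X E)) + Ran (χ j m)) :=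
    fun j m => wclosed_add_ran hC hYc hYi (hχC j m)
  have hclsub : ∀ j m, WClosure ((Y : Set (X E)) + V j) ⊆ (Y : Set (X E)) + Ran (χ j m) := by
    intro j m
    refine wclosure_subset ?_ (hYRanW j m)
    exact Set.add_subset_add_left (hVRanχ j m)
  have hcanonY : ∀ j m (z : X E), z ∈ (Y : Set (X E)) + Ran (χ j m) → z - χ j m z ∈ Y := by
    intro j m z hz
    rw [Set.mem_add] at hz
    obtain ⟨y, hy, r, hr, rfl⟩ := hz
    have hr' : χ j m r = r := hr
    have : (y + r) - χ j m (y + r) = y - χ j m y := by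
      rw [map_add, hr']; abel
    rw [this]
    exact Y.sub_mem hy (hYi _ (hχC j m) y hy)
  -- norm bounds
  have hbound : ∀ j m (z : X E), ‖φs j m z‖ ≤ Ks j * ‖z‖ := fun j m z =>
    le_trans ((φs j m).le_opNorm z)
      (mul_le_mul_of_nonneg_right (hKs j m) (norm_nonneg z))
  -- invariance of V j under C
  have hVinv : ∀ j, ∀ θ ∈ C, ∀ v ∈ V j, θ v ∈ V j := by
    intro j θ hθ v hv
    set u := θ v with hu
    have hfix : ∀ m, χ j m u = u := by
      intro m
      have hvr : χ j m v = v := hVRanχ j m hv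
      rw [hu, hcommP _ (hχC j m) θ hθ v, hvr]
    set a : ℕ → X E := fun m => φs j m u with hadef
    obtain ⟨H, hH⟩ := exists_ulim a (Ks j * ‖u‖) (fun m => hbound j m u)
    have hHV : H ∈ V j := by
      refine hWlim j ⟨a, fun m => hidemP _ (hφsC j m) u, ?_⟩
      exact mapClusterPt_of_ulim hH
    have hsub : ∀ m, u - a m ∈ V j := by
      intro m
      have heq : u - a m = ψs j m (u - φs j m u) := by
        conv_lhs => rw [← hfix m]
        rw [hχapply]; abel
      rw [heq]
      refine hWsubV j m ?_
      rw [hWeq j m]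
      exact hidemP _ (hψsC j m) (u - φs j m u)
    have huH : u - H ∈ V j := ulim_mem_of_wclosed (hVc j) hsub (tendsto_const_sub_ulim hH)
    have hueq : u = (u - H) + H := by abel
    rw [hueq, hp j]
    rw [hp j] at huH hHV
    exact (p j).add_mem huH hHV
  -- invariance of Y + V j and its closure
  have hYVinv : ∀ j, ∀ θ ∈ C, ∀ s ∈ (Y : Set (X E)) + V j, θ s ∈ (Y : Set (X E)) + V j := by
    intro j θ hθ s hs
    rw [Set.mem_add] at hs
    obtain ⟨y, hy, v, hv, rfl⟩ := hs
    rw [map_add]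
    exact Set.add_mem_add (hYi θ hθ y hy) (hVinv j θ hθ v hv)
  have hclInv : ∀ j, ∀ θ ∈ C, ∀ z ∈ WClosure ((Y : Set (X E)) + V j),
      θ z ∈ WClosure ((Y : Set (X E)) + V j) := by
    intro j θ hθ z hz
    exact wclosure_map_self (hC.wcont θ hθ) (hYVinv j θ hθ) hz
  -- submodule descriptions
  have hiInterEq : (⋂ j, V j) = ((⨅ j, p j : Submodule ℂ (X E)) : Set (X E)) := by
    rw [Submodule.coe_iInf]
    exact Set.iInter_congr fun j => hp j
  have hYVq : ∀ j, (Y : Set (X E)) + V j = ((Y ⊔ p j : Submodule ℂ (X E)) : Set (X E)) := by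
    intro j
    rw [hp j]
    exact (Submodule.coe_sup Y (p j)).symm
  have hVsubm : ∀ j (u v : X E), u ∈ V j → v ∈ V j → u - v ∈ V j := by
    intro j u v hu hv
    rw [hp j] at hu hv ⊢
    exact (p j).sub_mem hu hv
  have hVaddm : ∀ j (u v : X E), u ∈ V j → v ∈ V j → u + v ∈ V j := by
    intro j u v hu hv
    rw [hp j] at hu hv ⊢
    exact (p j).add_mem hu hv
  have hcladdm : ∀ j (u v : X E), u ∈ WClosure ((Y : Set (X E)) + V j) →
      v ∈ WClosure ((Y : Set (X E)) + V j) → u + v ∈ WClosure ((Y : Set (X E)) + V j) := by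
    intro j u v hu hv
    rw [hYVq j] at hu hv ⊢
    exact wclosure_coe_add hu hv
  have hclsubm : ∀ j (u v : X E), u ∈ WClosure ((Y : Set (X E)) + V j) →
      v ∈ WClosure ((Y : Set (X E)) + V j) → u - v ∈ WClosure ((Y : Set (X E)) + V j) := by
    intro j u v hu hv
    rw [hYVq j] at hu hv ⊢
    exact wclosure_coe_sub hu hv
  have hTq : (Y : Set (X E)) + (⋂ j, V j)
      = ((Y ⊔ ⨅ j, p j : Submodule ℂ (X E)) : Set (X E)) := by
    rw [hiInterEq]
    exact (Submodule.coe_sup Y (⨅ j, p j)).symm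
  set T := WClosure ((Y : Set (X E)) + ⋂ j, V j) with hTdef
  have hTw : WClosed T := wclosed_wclosure _
  have hTadd : ∀ {a b : X E}, a ∈ T → b ∈ T → a + b ∈ T := by
    intro a b ha hb
    rw [hTdef, hTq] at *
    exact wclosure_coe_add ha hb
  have hzeroV : ∀ j, (0 : X E) ∈ V j := fun j => by rw [hp j]; exact (p j).zero_mem
  have hYsubT : (Y : Set (X E)) ⊆ T := by
    intro y hy
    refine subset_wclosure _ ?_
    have h0 : (0 : X E) ∈ ⋂ j, V j := Set.mem_iInter.2 fun j => hzeroV j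
    have := Set.add_mem_add hy h0
    simpa using this
  have hiInterT : (⋂ j, V j) ⊆ T := by
    intro v hv
    refine subset_wclosure _ ?_
    have := Set.add_mem_add Y.zero_mem hv
    simpa using this
  have hVclYV : ∀ j, V j ⊆ WClosure ((Y : Set (X E)) + V j) := by
    intro j v hv
    refine subset_wclosure _ ?_
    have := Set.add_mem_add Y.zero_mem hv
    simpa using this
  -- ### main induction
  have key : ∀ (n : ℕ) (D : Finset (Fin k)) (z : X E),
      (∀ j ∈ D, z ∈ V j) → (∀ j, z ∈ WClosure ((Y : Set (X E)) + V j)) →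
      k ≤ D.card + n → z ∈ T := by
    intro n
    induction n with
    | zero =>
      intro D z hzD _ hcard
      have hDu : D = Finset.univ := by
        apply Finset.eq_univ_of_card
        have h1 : D.card ≤ Fintype.card (Fin k) := D.card_le_univ
        rw [Fintype.card_fin] at h1 ⊢
        omega
      refine hiInterT (Set.mem_iInter.2 fun j => hzD j ?_)
      rw [hDu]; exact Finset.mem_univ j
    | succ n ih =>
      intro D z hzD hzCl hcard
      by_cases hDu : D = Finset.univ
      · refine hiInterT (Set.mem_iInter.2 fun j => hzD j ?_)
        rw [hDu]; exact Finset.mem_univ j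
      · obtain ⟨j₂, hj₂⟩ : ∃ j, j ∉ D := by
          by_contra h
          push_neg at h
          exact hDu (Finset.eq_univ_iff_forall.2 h)
        set a : ℕ → X E := fun m => φs j₂ m z with hadef
        set b : ℕ → X E := fun m => ψs j₂ m (z - φs j₂ m z) with hbdef
        have hzmem : ∀ m, z ∈ (Y : Set (X E)) + Ran (χ j₂ m) :=
          fun m => hclsub j₂ m (hzCl j₂)
        have hyY : ∀ m, z - χ j₂ m z ∈ (Y : Set (X E)) := fun m => hcanonY j₂ m z (hzmem m)
        have heq : ∀ m, z - a m = (z - χ j₂ m z) + b m := by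
          intro m
          rw [hadef, hbdef, hχapply]
          abel
        have haRan : ∀ m, a m ∈ Ran (φs j₂ m) := fun m => hidemP _ (hφsC j₂ m) z
        have haV : ∀ j ∈ D, ∀ m, a m ∈ V j :=
          fun j hj m => hVinv j _ (hφsC j₂ m) z (hzD j hj)
        have haCl : ∀ j m, a m ∈ WClosure ((Y : Set (X E)) + V j) :=
          fun j m => hclInv j _ (hφsC j₂ m) z (hzCl j)
        have hbV : ∀ j ∈ insert j₂ D, ∀ m, b m ∈ V j := by
          intro j hj m
          rcases Finset.mem_insert.1 hj with h | h
          · subst h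
            refine hWsubV j m ?_
            rw [hWeq j m]
            exact hidemP _ (hψsC j m) (z - φs j m z)
          · have h1 : z - φs j₂ m z ∈ V j := hVsubm j _ _ (hzD j h) (haV j h m)
            exact hVinv j _ (hψsC j₂ m) _ h1
        have hbCl : ∀ j m, b m ∈ WClosure ((Y : Set (X E)) + V j) := by
          intro j m
          have h1 : z - φs j₂ m z ∈ WClosure ((Y : Set (X E)) + V j) :=
            hclsubm j _ _ (hzCl j) (haCl j m)
          exact hclInv j _ (hψsC j₂ m) _ h1
        obtain ⟨H, hH⟩ := exists_ulim a (Ks j₂ * ‖z‖) (fun m => hbound j₂ m z)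
        have hHV : ∀ j ∈ insert j₂ D, H ∈ V j := by
          intro j hj
          rcases Finset.mem_insert.1 hj with h | h
          · subst h
            exact hWlim j ⟨a, haRan, mapClusterPt_of_ulim hH⟩
          · exact ulim_mem_of_wclosed (hVc j) (haV j h) hH
        have hHCl : ∀ j, H ∈ WClosure ((Y : Set (X E)) + V j) :=
          fun j => ulim_mem_of_wclosed (wclosed_wclosure _) (haCl j) hH
        have hcard' : k ≤ (insert j₂ D).card + n := by
          rw [Finset.card_insert_of_notMem hj₂]
          omega
        have hHT : H ∈ T := ih (insert j₂ D) H hHV hHCl hcard'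
        have hbT : ∀ m, b m ∈ T := fun m =>
          ih (insert j₂ D) (b m) (fun j hj => hbV j hj m) (fun j => hbCl j m) hcard'
        have hsubT : ∀ m, z - a m ∈ T := by
          intro m
          rw [heq m]
          exact hTadd (hYsubT (hyY m)) (hbT m)
        have hzHT : z - H ∈ T :=
          ulim_mem_of_wclosed hTw hsubT (tendsto_const_sub_ulim hH)
        have hzeq : z = (z - H) + H := by abel
        rw [hzeq]
        exact hTadd hzHT hHT
  -- ### part 1
  have part1 : T = ⋂ j, WClosure ((Y : Set (X E)) + V j) := by
    apply Set.Subset.antisymm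
    · exact Set.subset_iInter fun j =>
        wclosure_mono (Set.add_subset_add_left (Set.iInter_subset _ j))
    · intro x hx
      exact key k ∅ x (by simp) (fun j => Set.mem_iInter.1 hx j) (by simp)
  refine ⟨part1, ?_⟩
  -- ### part 2
  intro hRef
  apply Set.Subset.antisymm
  · intro x hx
    rw [part1]
    refine Set.mem_iInter.2 fun j => ?_
    -- x belongs to Y + Ran (χ j m) for all m
    have hxm : ∀ m, x ∈ (Y : Set (X E)) + Ran (χ j m) := by
      intro m
      have hTsub : T ⊆ (Y : Set (X E)) + Ran (χ j m) := by
        rw [part1]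
        exact (Set.iInter_subset _ j).trans (hclsub j m)
      have hx' : x ∈ RefC C ((Y : Set (X E)) + Ran (χ j m)) := by
        intro θ hθ hvan
        exact hx θ hθ (fun y hy => hvan y (hTsub hy))
      have hxχY : x - χ j m x ∈ (Y : Set (X E)) := by
        have hmem : x - χ j m x ∈ RefC C (Y : Set (X E)) := by
          intro θ hθ hvanY
          have hθ'C : θ.comp (ContinuousLinearMap.id ℂ (X E) - χ j m) ∈ C :=
            hC.mul_mem θ hθ _ (hC.compl_mem _ (hχC j m))
          have happ : ∀ w : X E,
              (θ.comp (ContinuousLinearMap.id ℂ (X E) - χ j m)) w = θ (w - χ j m w) :=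
            fun w => rfl
          have hvan' : ∀ v ∈ (Y : Set (X E)) + Ran (χ j m),
              (θ.comp (ContinuousLinearMap.id ℂ (X E) - χ j m)) v = 0 := by
            intro v hv
            rw [Set.mem_add] at hv
            obtain ⟨y, hy, r, hr, rfl⟩ := hv
            have hr' : χ j m r = r := hr
            rw [happ]
            have he : (y + r) - χ j m (y + r) = y - χ j m y := by
              rw [map_add, hr']; abel
            rw [he, map_sub, hvanY y hy, hvanY (χ j m y) (hYi _ (hχC j m) y hy), sub_zero]
          have h0 := hx' _ hθ'C hvan'
          rw [happ] at h0
          exact h0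
        rw [hRef] at hmem
        exact hmem
      have hχR : χ j m x ∈ Ran (χ j m) := hidemP _ (hχC j m) x
      have hmm := Set.add_mem_add hxχY hχR
      rwa [sub_add_cancel] at hmm
    -- cluster argument
    set a : ℕ → X E := fun m => φs j m x with hadef
    obtain ⟨v, hv⟩ := exists_ulim a (Ks j * ‖x‖) (fun m => hbound j m x)
    have hvV : v ∈ V j :=
      hWlim j ⟨a, fun m => hidemP _ (hφsC j m) x, mapClusterPt_of_ulim hv⟩
    have hsubm : ∀ m, x - a m ∈ WClosure ((Y : Set (X E)) + V j) := by
      intro m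
      have heq2 : x - a m = (x - χ j m x) + ψs j m (x - φs j m x) := by
        rw [hadef, hχapply]
        abel
      rw [heq2]
      refine subset_wclosure _ (Set.add_mem_add (hcanonY j m x (hxm m)) ?_)
      refine hWsubV j m ?_
      rw [hWeq j m]
      exact hidemP _ (hψsC j m) (x - φs j m x)
    have hxv : x - v ∈ WClosure ((Y : Set (X E)) + V j) :=
      ulim_mem_of_wclosed (wclosed_wclosure _) hsubm (tendsto_const_sub_ulim hv)
    have hveq : x = (x - v) + v := by abel
    rw [hveq]
    exact hcladdm j _ _ hxv (hVclYV j hvV)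
  · intro x hx θ hθ hvan
    exact hvan x hx

end RBP
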